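/- Let G=(V,E) be a connected finite graph with m edges, α ∈ (0,1), and let w(t) be the unique global solution of the entropy flow with initial weight w_0 ∈ ℝ^m_+. Then exactly one of the following holds: (i) lim_{t→+∞} w_{e_j}(t) = +∞ for all 1 ≤ j ≤ m; or (ii) there exist constants w_{e_j}^* > 0 such that lim_{t→+∞} w_{e_j}(t) = w_{e_j}^* and lim_{t→+∞} 𝔇_{e_j}^α(t) = 𝔇_{e_j}^* = 0 for all 1 ≤ j ≤ m, where 𝔇_{e_j}^α(t) and 𝔇_{e_j}^* denote the edge entropies on e_j with respect to the weights w(t) and w^* = (w_{e_1}^*,…,w_{e_m}^*) respectively. -/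

import Mathlib

open Finset Filter Topology

namespace EntropyFlowPaper

variable {V : Type*} [Fintype V] [DecidableEq V]

/-- Effective weight: the value of `w` on edges, `0` on non-edges. -/
noncomputable def ew (G : SimpleGraph V) [DecidableRel G.Adj] (w : Sym2 V → ℝ) (a b : V) : ℝ :=
  if G.Adj a b then w s(a, b) else 0

/-- Auxiliary layers: `(layerAux G x j).1 = N_j(x)` and `(layerAux G x j).2 = ⋃_{k ≤ j} N_k(x)`:
the `(j+1)`-st layer consists of the vertices adjacent to `⋃_{k ≤ j} N_k(x)` that do not lie
in `⋃_{k ≤ j} N_k(x)`. -/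
def layerAux (G : SimpleGraph V) [DecidableRel G.Adj] (x : V) : ℕ → Finset V × Finset V
  | 0 => ({x}, {x})
  | (j + 1) =>
      let p := layerAux G x j
      let next := Finset.univ.filter fun u => u ∉ p.2 ∧ ∃ a ∈ p.2, G.Adj u a
      (next, p.2 ∪ next)

/-- The `j`-step neighbor set `N_j(x)`. -/
def layer (G : SimpleGraph V) [DecidableRel G.Adj] (x : V) (j : ℕ) : Finset V :=
  (layerAux G x j).1

/-- The outward-walk probability `P(x, z)`, for `z` in the `ℓ`-th layer `N_ℓ(x)`:
`P(x,z) = Σ_{chains x = z₀, z₁ ∈ N₁(x), …, z_{ℓ-1} ∈ N_{ℓ-1}(x), z_ℓ = z}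
  Π_k w_{z_{k-1} z_k} / (Σ_{u ∈ N_k(x)} w_{z_{k-1} u})`, written recursively. -/
noncomputable def outP (G : SimpleGraph V) [DecidableRel G.Adj] (w : Sym2 V → ℝ) (x : V) :
    ℕ → V → ℝ
  | 0, z => if z = x then 1 else 0
  | (ℓ + 1), z => ∑ y ∈ layer G x ℓ,
      outP G w x ℓ y * ew G w y z / ∑ u ∈ layer G x (ℓ + 1), ew G w y u

/-- The `α`-lazy outward random walk `R_x^α(z)`: it equals `α` at `z = x`; for `z ∈ N_j(x)`
(`j ≥ 1`) it equals `(1-α)^j * α * P(x,z)` if `z` is adjacent to `N_{j+1}(x)`, and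
`(1-α)^j * P(x,z)` otherwise. -/
noncomputable def lazyWalk (G : SimpleGraph V) [DecidableRel G.Adj] (w : Sym2 V → ℝ) (α : ℝ)
    (x z : V) : ℝ :=
  if z = x then α
  else ∑ j ∈ Finset.Icc 1 (Fintype.card V),
    (if z ∈ layer G x j then
      (if ∃ u ∈ layer G x (j + 1), G.Adj z u then (1 - α) ^ j * α * outP G w x j z
       else (1 - α) ^ j * outP G w x j z)
     else 0)

/-- Kullback–Leibler divergence `D_KL(P, Q) = Σ_z P z * log (P z / Q z)` on a finite set. -/
noncomputable def KL (P Q : V → ℝ) : ℝ := ∑ z, P z * Real.log (P z / Q z)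

/-- The edge entropy `𝔇_e^α = D_KL(R_x^α, R_y^α) + D_KL(R_y^α, R_x^α)` for the edge `e = xy`. -/
noncomputable def entropyD (G : SimpleGraph V) [DecidableRel G.Adj] (w : Sym2 V → ℝ) (α : ℝ)
    (x y : V) : ℝ :=
  KL (lazyWalk G w α x) (lazyWalk G w α y) + KL (lazyWalk G w α y) (lazyWalk G w α x)

/-- Euclidean distance `|w - w'|` between two weight vectors, over the edges of `G`. -/
noncomputable def wdist (G : SimpleGraph V) [DecidableRel G.Adj] (w w' : Sym2 V → ℝ) : ℝ :=
  Real.sqrt (∑ e ∈ G.edgeFinset, (w e - w' e) ^ 2)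

/-- `w` is a solution of the entropy flow `w_e'(t) = 𝔇_e^α(t)`, `w_e(t) > 0`, `w_e(0) = w0_e`
on the time set `S`. -/
def IsEntropyFlowSolutionOn (G : SimpleGraph V) [DecidableRel G.Adj] (α : ℝ)
    (w0 : Sym2 V → ℝ) (S : Set ℝ) (w : ℝ → Sym2 V → ℝ) : Prop :=
  (∀ e ∈ G.edgeFinset, w 0 e = w0 e) ∧
  (∀ t ∈ S, ∀ e ∈ G.edgeFinset, 0 < w t e) ∧
  (∀ t ∈ S, ∀ x y : V, G.Adj x y →
    HasDerivWithinAt (fun τ => w τ s(x, y)) (entropyD G (w t) α x y) S t)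

end EntropyFlowPaper

namespace EntropyFlowPaper

section Aux1
variable {V : Type*} [Fintype V] [DecidableEq V]

variable (G : SimpleGraph V) [DecidableRel G.Adj] (x : V)

/-- ball of radius j -/
def ball (j : ℕ) : Finset V := (layerAux G x j).2

lemma ball_zero : ball G x 0 = {x} := rfl

lemma layer_zero : layer G x 0 = {x} := rfl

lemma layer_succ (j : ℕ) :
    layer G x (j + 1) =
      Finset.univ.filter fun u => u ∉ ball G x j ∧ ∃ a ∈ ball G x j, G.Adj u a := rfl

lemma ball_succ (j : ℕ) : ball G x (j + 1) = ball G x j ∪ layer G x (j + 1) := rfl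

lemma mem_layer_succ {z : V} {j : ℕ} :
    z ∈ layer G x (j + 1) ↔ z ∉ ball G x j ∧ ∃ a ∈ ball G x j, G.Adj z a := by
  rw [layer_succ]; simp

lemma ball_subset_succ (j : ℕ) : ball G x j ⊆ ball G x (j + 1) := by
  rw [ball_succ]; exact Finset.subset_union_left

lemma ball_mono {j k : ℕ} (h : j ≤ k) : ball G x j ⊆ ball G x k := by
  induction k with
  | zero => simpa [Nat.le_zero.mp h]
  | succ k ih =>
    rcases Nat.lt_or_ge j (k+1) with h' | h'
    · exact (ih (Nat.lt_succ_iff.mp h')).trans (ball_subset_succ G x k)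
    · have : j = k + 1 := le_antisymm h h'
      simp [this]

lemma layer_subset_ball (j : ℕ) : layer G x j ⊆ ball G x j := by
  cases j with
  | zero => simp [layer_zero, ball_zero]
  | succ j => rw [ball_succ]; exact Finset.subset_union_right

lemma mem_ball_self (j : ℕ) : x ∈ ball G x j :=
  ball_mono G x (Nat.zero_le j) (by simp [ball_zero])

lemma not_mem_ball_of_mem_layer_succ {z : V} {j : ℕ} (h : z ∈ layer G x (j + 1)) :
    z ∉ ball G x j := ((mem_layer_succ G x).mp h).1

lemma exists_adj_layer {z : V} {ℓ : ℕ} (hz : z ∈ layer G x (ℓ + 1)) :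
    ∃ a ∈ layer G x ℓ, G.Adj z a := by
  obtain ⟨hz1, a, ha, hadj⟩ := (mem_layer_succ G x).mp hz
  cases ℓ with
  | zero => exact ⟨a, ha, hadj⟩
  | succ m =>
    rw [ball_succ] at ha
    rcases Finset.mem_union.mp ha with ha' | ha'
    · exfalso
      apply hz1
      have hz2 : z ∉ ball G x m := fun hc => hz1 (ball_subset_succ G x m hc)
      have : z ∈ layer G x (m + 1) := (mem_layer_succ G x).mpr ⟨hz2, a, ha', hadj⟩
      exact layer_subset_ball G x (m+1) this
    · exact ⟨a, ha', hadj⟩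

lemma walk_escape {s : Finset V} :
    ∀ {a b : V}, G.Walk a b → a ∈ s → b ∉ s → ∃ u, u ∉ s ∧ ∃ c ∈ s, G.Adj u c := by
  intro a b p
  induction p with
  | nil => intro h h'; exact absurd h h'
  | @cons a a' b h p ih =>
    intro ha hb
    by_cases h' : a' ∈ s
    · exact ih h' hb
    · exact ⟨a', h', a, ha, h.symm⟩

lemma ball_eq_univ (hG : G.Connected) : ball G x (Fintype.card V) = Finset.univ := by
  have key : ∀ j : ℕ, ball G x j = Finset.univ ∨ j + 1 ≤ (ball G x j).card := by
    intro j
    induction j with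
    | zero => right; simp [ball_zero]
    | succ j ih =>
      rcases ih with h | h
      · left
        rw [ball_succ, h]
        exact Finset.univ_subset_iff.mp Finset.subset_union_left
      · by_cases hu : ball G x j = Finset.univ
        · left
          rw [ball_succ, hu]
          exact Finset.univ_subset_iff.mp Finset.subset_union_left
        · right
          obtain ⟨z, hz⟩ : ∃ z, z ∉ ball G x j := by
            by_contra hc
            push_neg at hc
            exact hu (Finset.eq_univ_of_forall hc)
          obtain ⟨u, hu', c, hc, hadj⟩ :=
            walk_escape G (s := ball G x j) (hG x z).some (mem_ball_self G x j) hz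
          have hmem : u ∈ layer G x (j + 1) :=
            (mem_layer_succ G x).mpr ⟨hu', c, hc, hadj⟩
          have : insert u (ball G x j) ⊆ ball G x (j + 1) := by
            intro v hv
            rcases Finset.mem_insert.mp hv with rfl | hv
            · exact layer_subset_ball G x (j+1) hmem
            · exact ball_subset_succ G x j hv
          calc j + 1 + 1 ≤ (ball G x j).card + 1 := by omega
            _ = (insert u (ball G x j)).card := (Finset.card_insert_of_notMem hu').symm
            _ ≤ (ball G x (j+1)).card := Finset.card_le_card this
  rcases key (Fintype.card V) with h | h
  · exact h
  · exfalso
    have := Finset.card_le_univ (ball G x (Fintype.card V))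
    omega

lemma mem_layer_of_mem_ball {z : V} : ∀ {j : ℕ}, z ∈ ball G x j →
    z = x ∨ ∃ i, 1 ≤ i ∧ i ≤ j ∧ z ∈ layer G x i := by
  intro j
  induction j with
  | zero => intro h; left; simpa [ball_zero] using h
  | succ j ih =>
    intro h
    rw [ball_succ] at h
    rcases Finset.mem_union.mp h with h | h
    · rcases ih h with h' | ⟨i, h1, h2, h3⟩
      · exact Or.inl h'
      · exact Or.inr ⟨i, h1, h2.trans (Nat.le_succ j), h3⟩
    · exact Or.inr ⟨j + 1, Nat.succ_le_succ (Nat.zero_le j), le_rfl, h⟩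

lemma exists_layer (hG : G.Connected) {z : V} (hz : z ≠ x) :
    ∃ i, 1 ≤ i ∧ i ≤ Fintype.card V ∧ z ∈ layer G x i := by
  have : z ∈ ball G x (Fintype.card V) := by rw [ball_eq_univ G x hG]; exact Finset.mem_univ z
  rcases mem_layer_of_mem_ball G x this with h | h
  · exact absurd h hz
  · exact h


end Aux1

section Aux2

variable {V : Type*} [Fintype V] [DecidableEq V] (G : SimpleGraph V) [DecidableRel G.Adj]

/-- Positivity of a weight vector on the edges of `G`. -/
def Pw (w : Sym2 V → ℝ) : Prop := ∀ a b : V, G.Adj a b → 0 < w s(a, b)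

variable {G}

lemma ew_nonneg {w : Sym2 V → ℝ} (hw : Pw G w) (a b : V) : 0 ≤ ew G w a b := by
  unfold ew; split
  · exact (hw a b ‹_›).le
  · exact le_rfl

lemma ew_of_adj {w : Sym2 V → ℝ} {a b : V} (h : G.Adj a b) : ew G w a b = w s(a, b) :=
  if_pos h

lemma outP_nonneg {w : Sym2 V → ℝ} (hw : Pw G w) (x : V) :
    ∀ (ℓ : ℕ) (z : V), 0 ≤ outP G w x ℓ z := by
  intro ℓ
  induction ℓ with
  | zero => intro z; rw [outP]; split <;> norm_num
  | succ ℓ ih =>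
    intro z
    rw [outP]
    refine Finset.sum_nonneg fun y _ => div_nonneg (mul_nonneg (ih y) (ew_nonneg hw y z))
      (Finset.sum_nonneg fun u _ => ew_nonneg hw y u)

lemma outP_pos {w : Sym2 V → ℝ} (hw : Pw G w) (x : V) :
    ∀ (ℓ : ℕ) (z : V), z ∈ layer G x ℓ → 0 < outP G w x ℓ z := by
  intro ℓ
  induction ℓ with
  | zero =>
    intro z hz
    have : z = x := by simpa [layer_zero] using hz
    rw [outP]; simp [this]
  | succ ℓ ih =>
    intro z hz
    obtain ⟨a, ha, hadj⟩ := exists_adj_layer G x hz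
    rw [outP]
    refine Finset.sum_pos' (fun y _ => div_nonneg (mul_nonneg (outP_nonneg hw x ℓ y)
      (ew_nonneg hw y z)) (Finset.sum_nonneg fun u _ => ew_nonneg hw y u)) ⟨a, ha, ?_⟩
    have hea : 0 < ew G w a z := by
      rw [ew_of_adj hadj.symm]; exact hw a z hadj.symm
    refine div_pos (mul_pos (ih a ha) hea) ?_
    refine Finset.sum_pos' (fun u _ => ew_nonneg hw a u) ⟨z, hz, hea⟩

lemma lazyWalk_self {w : Sym2 V → ℝ} {α : ℝ} (x : V) : lazyWalk G w α x x = α := by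
  rw [lazyWalk]; simp

lemma lazyWalk_nonneg {w : Sym2 V → ℝ} {α : ℝ} (hw : Pw G w) (hα : 0 < α) (hα1 : α < 1)
    (x z : V) : 0 ≤ lazyWalk G w α x z := by
  rw [lazyWalk]
  split
  · exact hα.le
  · refine Finset.sum_nonneg fun j _ => ?_
    have h1 : (0:ℝ) ≤ (1 - α) ^ j := pow_nonneg (by linarith) j
    split
    · split
      · exact mul_nonneg (mul_nonneg h1 hα.le) (outP_nonneg hw x j _)
      · exact mul_nonneg h1 (outP_nonneg hw x j _)
    · exact le_rfl

lemma lazyWalk_pos (hG : G.Connected) {w : Sym2 V → ℝ} {α : ℝ} (hw : Pw G w)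
    (hα : 0 < α) (hα1 : α < 1) (x z : V) : 0 < lazyWalk G w α x z := by
  rw [lazyWalk]
  split
  · exact hα
  · rename_i hzx
    obtain ⟨i, hi1, hi2, hiz⟩ := exists_layer G x hG hzx
    have h1 : (0:ℝ) < (1 - α) ^ i := pow_pos (by linarith) i
    refine Finset.sum_pos' (fun j _ => ?_) ⟨i, Finset.mem_Icc.mpr ⟨hi1, hi2⟩, ?_⟩
    · have h1j : (0:ℝ) ≤ (1 - α) ^ j := pow_nonneg (by linarith) j
      split
      · split
        · exact mul_nonneg (mul_nonneg h1j hα.le) (outP_nonneg hw x j _)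
        · exact mul_nonneg h1j (outP_nonneg hw x j _)
      · exact le_rfl
    · rw [if_pos hiz]
      have := outP_pos hw x i z hiz
      split
      · exact mul_pos (mul_pos h1 hα) this
      · exact mul_pos h1 this

lemma pair_nonneg {p q : ℝ} (hp : 0 ≤ p) (hq : 0 ≤ q) :
    0 ≤ p * Real.log (p / q) + q * Real.log (q / p) := by
  rcases hp.eq_or_lt with rfl | hp'
  · simp
  rcases hq.eq_or_lt with rfl | hq'
  · simp
  have heq : p * Real.log (p / q) + q * Real.log (q / p)
      = (p - q) * (Real.log p - Real.log q) := by
    rw [Real.log_div hp'.ne' hq'.ne', Real.log_div hq'.ne' hp'.ne']; ring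
  rw [heq]
  rcases le_total p q with h | h
  · exact mul_nonneg_iff.mpr (Or.inr ⟨sub_nonpos.2 h,
      sub_nonpos.2 (Real.log_le_log hp' h)⟩)
  · exact mul_nonneg (sub_nonneg.2 h) (sub_nonneg.2 (Real.log_le_log hq' h))

lemma entropyD_eq_sum (w : Sym2 V → ℝ) (α : ℝ) (x y : V) :
    entropyD G w α x y = ∑ z, (lazyWalk G w α x z *
      Real.log (lazyWalk G w α x z / lazyWalk G w α y z) +
      lazyWalk G w α y z * Real.log (lazyWalk G w α y z / lazyWalk G w α x z)) := by
  rw [entropyD, KL, KL, ← Finset.sum_add_distrib]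

lemma pair_le_entropyD {w : Sym2 V → ℝ} {α : ℝ} (hw : Pw G w) (hα : 0 < α) (hα1 : α < 1)
    (x y z : V) :
    lazyWalk G w α x z * Real.log (lazyWalk G w α x z / lazyWalk G w α y z) +
      lazyWalk G w α y z * Real.log (lazyWalk G w α y z / lazyWalk G w α x z)
      ≤ entropyD G w α x y := by
  rw [entropyD_eq_sum]
  exact Finset.single_le_sum (fun u _ => pair_nonneg (lazyWalk_nonneg hw hα hα1 x u)
    (lazyWalk_nonneg hw hα hα1 y u)) (Finset.mem_univ z)

lemma entropyD_nonneg {w : Sym2 V → ℝ} {α : ℝ} (hw : Pw G w) (hα : 0 < α) (hα1 : α < 1)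
    (x y : V) : 0 ≤ entropyD G w α x y := by
  rw [entropyD_eq_sum]
  exact Finset.sum_nonneg fun u _ => pair_nonneg (lazyWalk_nonneg hw hα hα1 x u)
    (lazyWalk_nonneg hw hα hα1 y u)

end Aux2

section Aux3

variable {V : Type*} [Fintype V] [DecidableEq V] {G : SimpleGraph V} [DecidableRel G.Adj]

lemma ew_congr {w1 w2 : Sym2 V → ℝ} (h : ∀ a b, G.Adj a b → w1 s(a, b) = w2 s(a, b))
    (a b : V) : ew G w1 a b = ew G w2 a b := by
  unfold ew; split
  · exact h a b ‹_›
  · rfl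

lemma outP_congr {w1 w2 : Sym2 V → ℝ} (h : ∀ a b, G.Adj a b → w1 s(a, b) = w2 s(a, b))
    (x : V) : ∀ (ℓ : ℕ) (z : V), outP G w1 x ℓ z = outP G w2 x ℓ z := by
  intro ℓ
  induction ℓ with
  | zero => intro z; rw [outP, outP]
  | succ ℓ ih =>
    intro z
    rw [outP, outP]
    refine Finset.sum_congr rfl fun y _ => ?_
    rw [ih y, ew_congr h y z]
    congr 1
    exact Finset.sum_congr rfl fun u _ => ew_congr h y u

lemma lazyWalk_congr {w1 w2 : Sym2 V → ℝ} (h : ∀ a b, G.Adj a b → w1 s(a, b) = w2 s(a, b))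
    (α : ℝ) (x z : V) : lazyWalk G w1 α x z = lazyWalk G w2 α x z := by
  rw [lazyWalk, lazyWalk]
  split
  · rfl
  · refine Finset.sum_congr rfl fun j _ => ?_
    split
    · split <;> rw [outP_congr h x j z]
    · rfl

lemma entropyD_congr {w1 w2 : Sym2 V → ℝ} (h : ∀ a b, G.Adj a b → w1 s(a, b) = w2 s(a, b))
    (α : ℝ) (x y : V) : entropyD G w1 α x y = entropyD G w2 α x y := by
  rw [entropyD_eq_sum, entropyD_eq_sum]
  refine Finset.sum_congr rfl fun z _ => ?_
  rw [lazyWalk_congr h α x z, lazyWalk_congr h α y z]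

lemma continuous_ew (a b : V) : Continuous fun w : Sym2 V → ℝ => ew G w a b := by
  unfold ew; split
  · exact continuous_apply _
  · exact continuous_const

lemma continuousAt_outP {W : Sym2 V → ℝ} (hW : Pw G W) (x : V) :
    ∀ (ℓ : ℕ) (z : V), ContinuousAt (fun w : Sym2 V → ℝ => outP G w x ℓ z) W := by
  intro ℓ
  induction ℓ with
  | zero =>
    intro z
    have : (fun w : Sym2 V → ℝ => outP G w x 0 z) = fun _ => if z = x then (1:ℝ) else 0 := by
      funext w; rw [outP]
    rw [this]; exact continuousAt_const
  | succ ℓ ih =>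
    intro z
    have hfun : (fun w : Sym2 V → ℝ => outP G w x (ℓ + 1) z) = fun w => ∑ y ∈ layer G x ℓ,
        outP G w x ℓ y * ew G w y z / ∑ u ∈ layer G x (ℓ + 1), ew G w y u := by
      funext w; rw [outP]
    rw [hfun]
    refine tendsto_finset_sum _ fun y _ => ?_
    by_cases hd : ∃ u ∈ layer G x (ℓ + 1), G.Adj y u
    · obtain ⟨u, hu, hadj⟩ := hd
      have hden : 0 < ∑ u ∈ layer G x (ℓ + 1), ew G W y u := by
        refine Finset.sum_pos' (fun v _ => ew_nonneg hW y v) ⟨u, hu, ?_⟩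
        rw [ew_of_adj hadj]; exact hW y u hadj
      exact ((ih y).mul (continuous_ew y z).continuousAt).div
        (continuous_finset_sum _ fun u _ => continuous_ew y u).continuousAt hden.ne'
    · have hz0 : ∀ w : Sym2 V → ℝ, ∑ u ∈ layer G x (ℓ + 1), ew G w y u = 0 := by
        intro w
        refine Finset.sum_eq_zero fun u hu => ?_
        unfold ew
        rw [if_neg fun h => hd ⟨u, hu, h⟩]
      have heq : (fun w : Sym2 V → ℝ =>
          outP G w x ℓ y * ew G w y z / ∑ u ∈ layer G x (ℓ + 1), ew G w y u)
          = fun _ => (0:ℝ) := by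
        funext w; rw [hz0 w, div_zero]
      show ContinuousAt (fun w : Sym2 V → ℝ =>
          outP G w x ℓ y * ew G w y z / ∑ u ∈ layer G x (ℓ + 1), ew G w y u) W
      rw [heq]; exact continuousAt_const

lemma continuousAt_lazyWalk {W : Sym2 V → ℝ} (hW : Pw G W) (α : ℝ) (x z : V) :
    ContinuousAt (fun w : Sym2 V → ℝ => lazyWalk G w α x z) W := by
  by_cases hz : z = x
  · simp only [lazyWalk, if_pos hz]; exact continuousAt_const
  · simp only [lazyWalk, if_neg hz]
    refine tendsto_finset_sum _ fun j _ => ?_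
    by_cases hm : z ∈ layer G x j
    · simp only [if_pos hm]
      by_cases hc : ∃ u ∈ layer G x (j + 1), G.Adj z u
      · simp only [if_pos hc]
        exact continuousAt_const.mul (continuousAt_outP hW x j z)
      · simp only [if_neg hc]
        exact continuousAt_const.mul (continuousAt_outP hW x j z)
    · simp only [if_neg hm]; exact continuousAt_const

lemma continuousAt_entropyD (hG : G.Connected) {W : Sym2 V → ℝ} (hW : Pw G W) {α : ℝ}
    (hα : 0 < α) (hα1 : α < 1) (x y : V) :
    ContinuousAt (fun w : Sym2 V → ℝ => entropyD G w α x y) W := by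
  simp only [entropyD_eq_sum]
  have key : ∀ z : V, ContinuousAt (fun w : Sym2 V → ℝ =>
      lazyWalk G w α x z * Real.log (lazyWalk G w α x z / lazyWalk G w α y z) +
      lazyWalk G w α y z * Real.log (lazyWalk G w α y z / lazyWalk G w α x z)) W := by
    intro z
    have hP : ContinuousAt (fun w : Sym2 V → ℝ => lazyWalk G w α x z) W :=
      continuousAt_lazyWalk hW α x z
    have hQ : ContinuousAt (fun w : Sym2 V → ℝ => lazyWalk G w α y z) W :=
      continuousAt_lazyWalk hW α y z
    have hPx : 0 < lazyWalk G W α x z := lazyWalk_pos hG hW hα hα1 x z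
    have hQx : 0 < lazyWalk G W α y z := lazyWalk_pos hG hW hα hα1 y z
    have h1 : ContinuousAt (fun w : Sym2 V → ℝ =>
        lazyWalk G w α x z / lazyWalk G w α y z) W := hP.div hQ hQx.ne'
    have h2 : ContinuousAt (fun w : Sym2 V → ℝ =>
        lazyWalk G w α y z / lazyWalk G w α x z) W := hQ.div hP hPx.ne'
    have h3 : ContinuousAt (fun w : Sym2 V → ℝ =>
        Real.log (lazyWalk G w α x z / lazyWalk G w α y z)) W :=
      h1.log (div_ne_zero hPx.ne' hQx.ne')
    have h4 : ContinuousAt (fun w : Sym2 V → ℝ =>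
        Real.log (lazyWalk G w α y z / lazyWalk G w α x z)) W :=
      h2.log (div_ne_zero hQx.ne' hPx.ne')
    exact (hP.mul h3).add (hQ.mul h4)
  exact tendsto_finset_sum _ fun z _ => key z

end Aux3

section Aux4

variable {V : Type*} [Fintype V] [DecidableEq V] {G : SimpleGraph V} [DecidableRel G.Adj]

lemma pw_of_sol {α : ℝ} {w0 : Sym2 V → ℝ} {w : ℝ → Sym2 V → ℝ}
    (hsol : IsEntropyFlowSolutionOn G α w0 (Set.Ici 0) w) {t : ℝ} (ht : t ∈ Set.Ici (0:ℝ)) :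
    Pw G (w t) := fun a b hab =>
  hsol.2.1 t ht s(a, b) (SimpleGraph.mem_edgeFinset.mpr ((SimpleGraph.mem_edgeSet G).mpr hab))

lemma flow_monotoneOn {α : ℝ} (hα : α ∈ Set.Ioo (0:ℝ) 1) {w0 : Sym2 V → ℝ}
    {w : ℝ → Sym2 V → ℝ} (hsol : IsEntropyFlowSolutionOn G α w0 (Set.Ici 0) w)
    {x y : V} (hxy : G.Adj x y) :
    MonotoneOn (fun t => w t s(x, y)) (Set.Ici (0:ℝ)) := by
  refine monotoneOn_of_hasDerivWithinAt_nonneg (f' := fun t => entropyD G (w t) α x y)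
    (convex_Ici 0) (fun t ht => (hsol.2.2 t ht x y hxy).continuousWithinAt)
    (fun t ht => (hsol.2.2 t (interior_subset ht) x y hxy).mono interior_subset)
    (fun t ht => entropyD_nonneg (pw_of_sol hsol (interior_subset ht)) hα.1 hα.2 x y)

lemma flow_unbounded_of_entropy_ge {α : ℝ} {w0 : Sym2 V → ℝ} {w : ℝ → Sym2 V → ℝ}
    (hsol : IsEntropyFlowSolutionOn G α w0 (Set.Ici 0) w)
    {x y : V} (hxy : G.Adj x y) {c T M : ℝ} (hc : 0 < c) (hT : 0 ≤ T)
    (hge : ∀ t, T ≤ t → c ≤ entropyD G (w t) α x y)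
    (hM : ∀ t ∈ Set.Ici (0:ℝ), w t s(x, y) ≤ M) : False := by
  have hder : ∀ t ∈ Set.Ici T, HasDerivWithinAt (fun τ => w τ s(x, y) - c * τ)
      (entropyD G (w t) α x y - c) (Set.Ici T) t := by
    intro t ht
    have h1 := (hsol.2.2 t (hT.trans ht) x y hxy).mono (Set.Ici_subset_Ici.mpr hT)
    have h2 : HasDerivWithinAt (fun τ : ℝ => c * τ) c (Set.Ici T) t := by
      simpa using (hasDerivWithinAt_id t (Set.Ici T)).const_mul c
    exact h1.sub h2
  have hmono : MonotoneOn (fun t => w t s(x, y) - c * t) (Set.Ici T) := by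
    refine monotoneOn_of_hasDerivWithinAt_nonneg
      (f' := fun t => entropyD G (w t) α x y - c) (convex_Ici T)
      (fun t ht => (hder t ht).continuousWithinAt)
      (fun t ht => (hder t (interior_subset ht)).mono interior_subset)
      (fun t ht => ?_)
    rw [interior_Ici] at ht
    exact sub_nonneg.2 (hge t (le_of_lt ht))
  set B := w T s(x, y) - c * T with hB
  set t1 := max T ((M - B) / c + 1) with ht1
  have ht1T : T ≤ t1 := le_max_left _ _
  have h1 : B ≤ w t1 s(x, y) - c * t1 :=
    hmono (Set.mem_Ici.mpr le_rfl) (Set.mem_Ici.mpr ht1T) ht1T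
  have h2 : (M - B) / c + 1 ≤ t1 := le_max_right _ _
  have h3 : M - B + c ≤ c * t1 := by
    have h := mul_le_mul_of_nonneg_left h2 hc.le
    rw [mul_add, mul_one, mul_div_cancel₀ _ hc.ne'] at h
    linarith
  have h4 : w t1 s(x, y) ≤ M := hM t1 (Set.mem_Ici.mpr (hT.trans ht1T))
  linarith

lemma monotone_shift {f : ℝ → ℝ} (hf : MonotoneOn f (Set.Ici (0:ℝ))) :
    Monotone (fun t => f (max t 0)) := fun s t hst =>
  hf (Set.mem_Ici.mpr (le_max_right s 0)) (Set.mem_Ici.mpr (le_max_right t 0))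
    (max_le_max hst le_rfl)

lemma tendsto_of_monotoneOn_bdd {f : ℝ → ℝ} (hf : MonotoneOn f (Set.Ici (0:ℝ)))
    {M : ℝ} (hM : ∀ t ∈ Set.Ici (0:ℝ), f t ≤ M) :
    Tendsto f atTop (𝓝 (⨆ t, f (max t 0))) ∧ f 0 ≤ ⨆ t, f (max t 0) ∧
      ∀ t ∈ Set.Ici (0:ℝ), f t ≤ ⨆ t, f (max t 0) := by
  have hb : BddAbove (Set.range fun t => f (max t 0)) := by
    refine ⟨M, ?_⟩
    rintro _ ⟨t, rfl⟩
    exact hM _ (Set.mem_Ici.mpr (le_max_right t 0))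
  have h1 := tendsto_atTop_ciSup (monotone_shift hf) hb
  refine ⟨h1.congr' ?_, ?_, ?_⟩
  · filter_upwards [eventually_ge_atTop (0:ℝ)] with t ht
    rw [max_eq_left ht]
  · simpa using le_ciSup hb (0:ℝ)
  · intro t ht
    have := le_ciSup hb t
    rwa [max_eq_left ht] at this
  
lemma tendsto_atTop_of_monotoneOn_unbdd {f : ℝ → ℝ} (hf : MonotoneOn f (Set.Ici (0:ℝ)))
    (hub : ¬ ∃ M, ∀ t ∈ Set.Ici (0:ℝ), f t ≤ M) : Tendsto f atTop atTop := by
  have hnb : ¬ BddAbove (Set.range fun t => f (max t 0)) := by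
    rintro ⟨M, hMb⟩
    refine hub ⟨M, fun t ht => ?_⟩
    have := hMb (Set.mem_range_self t)
    rwa [max_eq_left ht] at this
  refine (tendsto_atTop_atTop_of_monotone' (monotone_shift hf) hnb).congr' ?_
  filter_upwards [eventually_ge_atTop (0:ℝ)] with t ht
  rw [max_eq_left ht]

lemma lazyWalk_adj (hV : 1 ≤ Fintype.card V) {w : Sym2 V → ℝ} {α : ℝ} {x y : V}
    (hxy : G.Adj x y) :
    lazyWalk G w α y x = (if ∃ u ∈ layer G y 2, G.Adj x u then (1 - α) * α else (1 - α)) *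
      (w s(x, y) / ∑ v ∈ layer G y 1, ew G w y v) := by
  have hx1 : x ∈ layer G y 1 := (mem_layer_succ G y).mpr
    ⟨by simp [ball_zero, hxy.ne], y, by simp [ball_zero], hxy⟩
  have hnot : ∀ j ∈ Finset.Icc 1 (Fintype.card V), j ≠ 1 →
      (if x ∈ layer G y j then
        (if ∃ u ∈ layer G y (j + 1), G.Adj x u then (1 - α) ^ j * α * outP G w y j x
         else (1 - α) ^ j * outP G w y j x)
       else 0) = 0 := by
    intro j hj hj1
    have hj2 : 2 ≤ j := by
      rcases Finset.mem_Icc.mp hj with ⟨h1, _⟩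
      omega
    obtain ⟨k, rfl⟩ : ∃ k, j = k + 1 + 1 := ⟨j - 2, by omega⟩
    rw [if_neg]
    intro hmem
    exact not_mem_ball_of_mem_layer_succ G y hmem
      (ball_mono G y (by omega : 1 ≤ k + 1) (layer_subset_ball G y 1 hx1))
  have houtP : outP G w y 1 x = w s(x, y) / ∑ v ∈ layer G y 1, ew G w y v := by
    rw [show (1:ℕ) = 0 + 1 from rfl, outP, layer_zero, Finset.sum_singleton, outP]
    rw [if_pos rfl, one_mul, ew_of_adj hxy.symm, Sym2.eq_swap]
  rw [lazyWalk, if_neg hxy.ne, Finset.sum_eq_single_of_mem 1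
    (Finset.mem_Icc.mpr ⟨le_rfl, hV⟩) hnot, if_pos hx1]
  split <;> rw [houtP, pow_one]

lemma mixed_false {α : ℝ} (hα : α ∈ Set.Ioo (0:ℝ) 1) {w0 : Sym2 V → ℝ} {w : ℝ → Sym2 V → ℝ}
    (hsol : IsEntropyFlowSolutionOn G α w0 (Set.Ici 0) w)
    {x y z' : V} (hxy : G.Adj x y) (hyz : G.Adj y z') {M : ℝ}
    (hM : ∀ t ∈ Set.Ici (0:ℝ), w t s(x, y) ≤ M)
    (hf : Tendsto (fun t => w t s(y, z')) atTop atTop) : False := by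
  have hV : 1 ≤ Fintype.card V := Fintype.card_pos_iff.mpr ⟨x⟩
  have hα0 := hα.1
  have hα1 := hα.2
  have hz1 : z' ∈ layer G y 1 := (mem_layer_succ G y).mpr
    ⟨by simp [ball_zero, hyz.ne'], y, by simp [ball_zero], hyz.symm⟩
  have hA0 : (0:ℝ) < (if ∃ u ∈ layer G y 2, G.Adj x u then (1 - α) * α else (1 - α)) := by
    split <;> nlinarith
  have hA1 : (if ∃ u ∈ layer G y 2, G.Adj x u then (1 - α) * α else (1 - α)) ≤ 1 := by
    split <;> nlinarith
  have hq_eq : ∀ t, lazyWalk G (w t) α y x =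
      (if ∃ u ∈ layer G y 2, G.Adj x u then (1 - α) * α else (1 - α)) *
      (w t s(x, y) / ∑ v ∈ layer G y 1, ew G (w t) y v) := fun t => lazyWalk_adj hV hxy
  have hSlb : ∀ t ∈ Set.Ici (0:ℝ), w t s(y, z') ≤ ∑ v ∈ layer G y 1, ew G (w t) y v := by
    intro t ht
    have := Finset.single_le_sum (f := fun v => ew G (w t) y v)
      (fun v _ => ew_nonneg (pw_of_sol hsol ht) y v) hz1
    simpa [ew_of_adj hyz] using this
  have hSpos : ∀ t ∈ Set.Ici (0:ℝ), 0 < ∑ v ∈ layer G y 1, ew G (w t) y v := by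
    intro t ht
    exact lt_of_lt_of_le (pw_of_sol hsol ht y z' hyz) (hSlb t ht)
  have hq_pos : ∀ t ∈ Set.Ici (0:ℝ), 0 < lazyWalk G (w t) α y x := by
    intro t ht
    rw [hq_eq t]
    exact mul_pos hA0 (div_pos (pw_of_sol hsol ht x y hxy) (hSpos t ht))
  have hStop : Tendsto (fun t => ∑ v ∈ layer G y 1, ew G (w t) y v) atTop atTop := by
    refine tendsto_atTop_mono' atTop ?_ hf
    filter_upwards [eventually_ge_atTop (0:ℝ)] with t ht
    exact hSlb t ht
  have hq_le : ∀ t ∈ Set.Ici (0:ℝ), lazyWalk G (w t) α y x ≤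
      M / ∑ v ∈ layer G y 1, ew G (w t) y v := by
    intro t ht
    rw [hq_eq t]
    have h1 : w t s(x, y) / (∑ v ∈ layer G y 1, ew G (w t) y v) ≤
        M / ∑ v ∈ layer G y 1, ew G (w t) y v := by
      have hS := hSpos t ht
      gcongr
      exact hM t ht
    calc (if ∃ u ∈ layer G y 2, G.Adj x u then (1 - α) * α else (1 - α)) *
        (w t s(x, y) / ∑ v ∈ layer G y 1, ew G (w t) y v)
        ≤ 1 * (w t s(x, y) / ∑ v ∈ layer G y 1, ew G (w t) y v) := by
          refine mul_le_mul_of_nonneg_right hA1 ?_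
          exact div_nonneg (pw_of_sol hsol ht x y hxy).le (hSpos t ht).le
      _ = w t s(x, y) / ∑ v ∈ layer G y 1, ew G (w t) y v := one_mul _
      _ ≤ M / ∑ v ∈ layer G y 1, ew G (w t) y v := h1
  have hq0 : Tendsto (fun t => lazyWalk G (w t) α y x) atTop (𝓝 0) := by
    refine tendsto_of_tendsto_of_tendsto_of_le_of_le' tendsto_const_nhds
      (Tendsto.div_atTop (tendsto_const_nhds : Tendsto (fun _ : ℝ => M) atTop (𝓝 M))
        hStop) ?_ ?_
    · filter_upwards [eventually_ge_atTop (0:ℝ)] with t ht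
      exact (hq_pos t ht).le
    · filter_upwards [eventually_ge_atTop (0:ℝ)] with t ht
      exact hq_le t ht
  have hq0' : Tendsto (fun t => lazyWalk G (w t) α y x) atTop (𝓝[>] 0) := by
    rw [tendsto_nhdsWithin_iff]
    refine ⟨hq0, ?_⟩
    filter_upwards [eventually_ge_atTop (0:ℝ)] with t ht
    exact hq_pos t ht
  have hinv : Tendsto (fun t => (lazyWalk G (w t) α y x)⁻¹) atTop atTop :=
    tendsto_inv_nhdsGT_zero.comp hq0'
  have hαq : Tendsto (fun t => α / lazyWalk G (w t) α y x) atTop atTop := by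
    simp only [div_eq_mul_inv]
    exact hinv.const_mul_atTop hα0
  have hL : Tendsto (fun t => α * Real.log (α / lazyWalk G (w t) α y x)) atTop atTop :=
    (Real.tendsto_log_atTop.comp hαq).const_mul_atTop hα0
  have hDlb : ∀ t ∈ Set.Ici (0:ℝ),
      α * Real.log (α / lazyWalk G (w t) α y x) - α ≤ entropyD G (w t) α x y := by
    intro t ht
    have hwp := pw_of_sol hsol ht
    have h1 := pair_le_entropyD hwp hα0 hα1 x y x
    rw [lazyWalk_self] at h1
    have hqt := hq_pos t ht
    have h2 : lazyWalk G (w t) α y x - α ≤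
        lazyWalk G (w t) α y x * Real.log (lazyWalk G (w t) α y x / α) := by
      have hlog2 : 1 - α / lazyWalk G (w t) α y x ≤
          Real.log (lazyWalk G (w t) α y x / α) := by
        have h3 := Real.log_le_sub_one_of_pos (div_pos hα0 hqt)
        rw [Real.log_div hα0.ne' hqt.ne'] at h3
        rw [Real.log_div hqt.ne' hα0.ne']
        linarith
      have h4 := mul_le_mul_of_nonneg_left hlog2 hqt.le
      have h5 : lazyWalk G (w t) α y x * (1 - α / lazyWalk G (w t) α y x) =
          lazyWalk G (w t) α y x - α := by
        field_simp
      linarith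
    linarith
  obtain ⟨T, hT⟩ := eventually_atTop.mp (hL.eventually_ge_atTop (1 + α))
  have hTc : ∀ t, max T 0 ≤ t → 1 ≤ entropyD G (w t) α x y := by
    intro t ht
    have h1 := hT t ((le_max_left T 0).trans ht)
    have h2 := hDlb t (Set.mem_Ici.mpr ((le_max_right T 0).trans ht))
    linarith
  exact flow_unbounded_of_entropy_ge hsol hxy one_pos (le_max_right T 0) hTc hM

end Aux4

section Aux5

variable {V : Type*} [Fintype V] [DecidableEq V] {G : SimpleGraph V} [DecidableRel G.Adj]

lemma walk_mixed (Bnd : Sym2 V → Prop) :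
    ∀ {u v : V}, G.Walk u v → (∃ a, G.Adj u a ∧ Bnd s(u, a)) →
      (∃ b, G.Adj v b ∧ ¬ Bnd s(v, b)) →
      ∃ c, (∃ a, G.Adj c a ∧ Bnd s(c, a)) ∧ ∃ b, G.Adj c b ∧ ¬ Bnd s(c, b) := by
  intro u v p
  induction p with
  | nil => intro h1 h2; exact ⟨_, h1, h2⟩
  | @cons u u' v h p ih =>
    intro h1 h2
    by_cases hu : ∃ b, G.Adj u b ∧ ¬ Bnd s(u, b)
    · exact ⟨u, h1, hu⟩
    · push_neg at hu
      refine ih ⟨u, h.symm, ?_⟩ h2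
      have := hu u' h
      rwa [Sym2.eq_swap] at this

end Aux5


end EntropyFlowPaper


open EntropyFlowPaper

/-- dichotomy for the global solution of the entropy flow: exactly one of
(i) all edge weights tend to `+∞`, or (ii) all edge weights converge to positive limits
`w_e^*`, the edge entropies tend to `0`, and the edge entropies of the limit weight vanish. -/
theorem entropyFlow_dichotomy {V : Type*} [Fintype V] [DecidableEq V]
    (G : SimpleGraph V) [DecidableRel G.Adj] (hG : G.Connected)
    (hE : G.edgeFinset.Nonempty)
    (α : ℝ) (hα : α ∈ Set.Ioo (0 : ℝ) 1)
    (w0 : Sym2 V → ℝ) (hw0 : ∀ e ∈ G.edgeFinset, 0 < w0 e)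
    (w : ℝ → Sym2 V → ℝ)
    (hsol : IsEntropyFlowSolutionOn G α w0 (Set.Ici 0) w) :
    Xor'
      (∀ x y : V, G.Adj x y → Tendsto (fun t => w t s(x, y)) atTop atTop)
      (∃ wstar : Sym2 V → ℝ, (∀ e ∈ G.edgeFinset, 0 < wstar e) ∧
        ∀ x y : V, G.Adj x y →
          Tendsto (fun t => w t s(x, y)) atTop (𝓝 (wstar s(x, y))) ∧
          Tendsto (fun t => entropyD G (w t) α x y) atTop (𝓝 (0 : ℝ)) ∧
          entropyD G wstar α x y = 0) := by
  classical
  have hedge : ∃ a b : V, G.Adj a b := by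
    obtain ⟨e, he⟩ := hE
    revert he
    refine Sym2.ind (fun a b he => ?_) e
    exact ⟨a, b, by rwa [SimpleGraph.mem_edgeFinset, SimpleGraph.mem_edgeSet] at he⟩
  by_cases hall : ∀ x y : V, G.Adj x y → ∃ M, ∀ t ∈ Set.Ici (0:ℝ), w t s(x, y) ≤ M
  · -- all edges bounded : case (ii)
    have key : ∀ e ∈ G.edgeFinset,
        Tendsto (fun t => w t e) atTop (𝓝 (⨆ t, w (max t 0) e)) ∧
        w0 e ≤ (⨆ t, w (max t 0) e) ∧
        ∀ t ∈ Set.Ici (0:ℝ), w t e ≤ (⨆ t, w (max t 0) e) := by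
      intro e
      refine Sym2.ind (fun x y he => ?_) e
      have hxy : G.Adj x y := by
        rwa [SimpleGraph.mem_edgeFinset, SimpleGraph.mem_edgeSet] at he
      obtain ⟨M, hM⟩ := hall x y hxy
      obtain ⟨h1, h2, h3⟩ := tendsto_of_monotoneOn_bdd (flow_monotoneOn hα hsol hxy) hM
      exact ⟨h1, (hsol.1 _ he) ▸ h2, h3⟩
    refine Or.inr ⟨?_, ?_⟩
    swap
    · -- ¬ (i)
      intro hA
      obtain ⟨a, b, hab⟩ := hedge
      have hme : s(a, b) ∈ G.edgeFinset :=
        SimpleGraph.mem_edgeFinset.mpr ((SimpleGraph.mem_edgeSet G).mpr hab)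
      exact not_tendsto_atTop_of_tendsto_nhds ((key _ hme).1) (hA a b hab)
    · -- (ii)
      refine ⟨fun e => if e ∈ G.edgeFinset then (⨆ t, w (max t 0) e) else 0,
        fun e he => ?_, fun x y hxy => ?_⟩
      · simp only [if_pos he]
        exact lt_of_lt_of_le (hw0 e he) (key e he).2.1
      · have hme : s(x, y) ∈ G.edgeFinset :=
          SimpleGraph.mem_edgeFinset.mpr ((SimpleGraph.mem_edgeSet G).mpr hxy)
        have hPws : Pw G (fun e => if e ∈ G.edgeFinset then (⨆ t, w (max t 0) e) else 0) := by
          intro a b hab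
          have hme' : s(a, b) ∈ G.edgeFinset :=
            SimpleGraph.mem_edgeFinset.mpr ((SimpleGraph.mem_edgeSet G).mpr hab)
          simp only [if_pos hme']
          exact lt_of_lt_of_le (hw0 _ hme') (key _ hme').2.1
        have hpatch : Tendsto (fun t => fun e => if e ∈ G.edgeFinset then w t e else 0) atTop
            (𝓝 (fun e => if e ∈ G.edgeFinset then (⨆ t, w (max t 0) e) else 0)) := by
          rw [tendsto_pi_nhds]
          intro e
          by_cases he : e ∈ G.edgeFinset
          · simp only [if_pos he]
            exact (key e he).1
          · simp only [if_neg he]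
            exact tendsto_const_nhds
        have hDtend : Tendsto (fun t => entropyD G (w t) α x y) atTop
            (𝓝 (entropyD G (fun e => if e ∈ G.edgeFinset then (⨆ t, w (max t 0) e) else 0)
              α x y)) := by
          have hcont := continuousAt_entropyD hG hPws hα.1 hα.2 x y
          refine (hcont.tendsto.comp hpatch).congr fun t => ?_
          refine entropyD_congr (fun a b hab => ?_) α x y
          exact if_pos (SimpleGraph.mem_edgeFinset.mpr ((SimpleGraph.mem_edgeSet G).mpr hab))
        have hDzero : entropyD G
            (fun e => if e ∈ G.edgeFinset then (⨆ t, w (max t 0) e) else 0) α x y = 0 := by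
          by_contra hne
          have hDnn : 0 ≤ entropyD G
              (fun e => if e ∈ G.edgeFinset then (⨆ t, w (max t 0) e) else 0) α x y :=
            entropyD_nonneg hPws hα.1 hα.2 x y
          have hpos : 0 < entropyD G
              (fun e => if e ∈ G.edgeFinset then (⨆ t, w (max t 0) e) else 0) α x y :=
            lt_of_le_of_ne hDnn (Ne.symm hne)
          set D := entropyD G
            (fun e => if e ∈ G.edgeFinset then (⨆ t, w (max t 0) e) else 0) α x y with hD
          have hev : ∀ᶠ t in atTop, D / 2 < entropyD G (w t) α x y :=
            hDtend.eventually (lt_mem_nhds (by linarith))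
          obtain ⟨T, hT⟩ := eventually_atTop.mp hev
          refine flow_unbounded_of_entropy_ge hsol hxy (by linarith : (0:ℝ) < D / 2)
            (le_max_right T 0) (fun t ht => (hT t ((le_max_left T 0).trans ht)).le)
            (M := ⨆ t, w (max t 0) s(x, y)) (fun t ht => (key _ hme).2.2 t ht)
        refine ⟨?_, ?_, hDzero⟩
        · simp only [if_pos hme]
          exact (key _ hme).1
        · rw [← hDzero]
          exact hDtend
  · -- not all bounded
    obtain ⟨x0, y0, hadj0, hnb0⟩ :
        ∃ x y : V, G.Adj x y ∧ ¬ ∃ M, ∀ t ∈ Set.Ici (0:ℝ), w t s(x, y) ≤ M := by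
      by_contra hc
      refine hall fun x y hxy => ?_
      by_contra hM
      exact hc ⟨x, y, hxy, hM⟩
    by_cases hnone : ∀ x y : V, G.Adj x y → ¬ ∃ M, ∀ t ∈ Set.Ici (0:ℝ), w t s(x, y) ≤ M
    · -- case (i)
      have hA : ∀ x y : V, G.Adj x y → Tendsto (fun t => w t s(x, y)) atTop atTop :=
        fun x y hxy =>
          tendsto_atTop_of_monotoneOn_unbdd (flow_monotoneOn hα hsol hxy) (hnone x y hxy)
      refine Or.inl ⟨hA, ?_⟩
      rintro ⟨wstar, _, hprop⟩
      obtain ⟨a, b, hab⟩ := hedge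
      exact not_tendsto_atTop_of_tendsto_nhds (hprop a b hab).1 (hA a b hab)
    · -- mixed case: contradiction
      exfalso
      obtain ⟨a0, b0, hadj1, hbnd⟩ :
          ∃ x y : V, G.Adj x y ∧ ∃ M, ∀ t ∈ Set.Ici (0:ℝ), w t s(x, y) ≤ M := by
        by_contra hc
        exact hnone fun x y hxy hM => hc ⟨x, y, hxy, hM⟩
      obtain ⟨c, ⟨a, hca, Ma, hMa⟩, ⟨b, hcb, hnb'⟩⟩ :=
        walk_mixed (G := G) (fun e => ∃ M, ∀ t ∈ Set.Ici (0:ℝ), w t e ≤ M)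
          ((hG a0 x0).some) ⟨b0, hadj1, hbnd⟩ ⟨y0, hadj0, hnb0⟩
      have hMac : ∀ t ∈ Set.Ici (0:ℝ), w t s(a, c) ≤ Ma := by
        intro t ht
        have := hMa t ht
        rwa [Sym2.eq_swap] at this
      have hfb : Tendsto (fun t => w t s(c, b)) atTop atTop :=
        tendsto_atTop_of_monotoneOn_unbdd (flow_monotoneOn hα hsol hcb) hnb'
      exact mixed_false hα hsol hca.symm hcb hMac hfb
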